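/- Let U(T) = Σ_{n≥0} U_n T^n be a formal power series over ℂ and set u(T) = −T^{−1} + U(T), a formal Laurent series. Let v = u² + u′, where u′ denotes the formal derivative (so u′ = T^{−2} + U′). Then v has the form v = 2T^{−2} + Σ_{n≥−1} v_n T^n, where v_{−1} = −2U_0 and v_n = (coefficient of T^n in U² + U′) − 2U_{n+1} for n ≥ 0, and these coefficients satisfy the cubic relation (1/4)·v_{−1}³ − v_0·v_{−1} + v_1 = 0. -/

import Mathlib

open scoped PowerSeries

/-- The formal derivative of a Laurent series: `(Σ aₙ Tⁿ)' = Σ n aₙ Tⁿ⁻¹`. -/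
noncomputable def lderiv (f : LaurentSeries ℂ) : LaurentSeries ℂ :=
  HahnSeries.single (-1 : ℤ) (1 : ℂ) *
    { coeff := fun n => (n : ℂ) * f.coeff n
      isPWO_support' := f.isPWO_support'.mono (by
        intro n hn
        simp only [Function.mem_support] at hn ⊢
        exact fun h => hn (by rw [h, mul_zero])) }

/-- A Miura datum with residue `-1`: `u = -T⁻¹ + U` with `U ∈ ℂ[[T]]`. -/
noncomputable def miura (U : PowerSeries ℂ) : LaurentSeries ℂ :=
  -(HahnSeries.single (-1 : ℤ) (1 : ℂ)) + HahnSeries.ofPowerSeries ℤ ℂ U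

/-!
Since `u = -T⁻¹ + U` and `(T⁻¹)' = -T⁻²`, expanding gives `v = 2T⁻² - 2T⁻¹U + (U² + U')`,
from which every coefficient of `v` can be read off. Writing `U = a + bT + cT² + ⋯`, this gives
`v₋₁ = -2a`, `v₀ = a² - b` and `v₁ = 2ab`, and the cubic relation becomes
`-2a³ + 2a³ - 2ab + 2ab = 0`.
-/

open HahnSeries PowerSeries

theorem HahnSeries.coeff_ofPowerSeries_of_neg {R : Type*} [Semiring R] (f : R⟦X⟧) {n : ℤ}
    (hn : n < 0) : (ofPowerSeries ℤ R f).coeff n = 0 := by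
  simp [PowerSeries.coeff_coe, hn]

theorem LaurentSeries.derivative_ofPowerSeries {R : Type*} [CommRing R] (f : R⟦X⟧) :
    derivative R (ofPowerSeries ℤ R f) = ofPowerSeries ℤ R (d⁄dX R f) := by
  ext n
  rw [derivative_apply, hasseDeriv_coeff, Nat.cast_one, Ring.choose_one_right, zsmul_eq_mul]
  obtain hn | rfl | hn := lt_trichotomy n (-1)
  · rw [coeff_ofPowerSeries_of_neg _ (by omega), coeff_ofPowerSeries_of_neg _ (by omega), mul_zero]
  · simp [coeff_ofPowerSeries_of_neg]
  · lift n to ℕ using (by omega) with k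
    rw [show (k : ℤ) + 1 = ((k + 1 : ℕ) : ℤ) by push_cast; ring, ofPowerSeries_apply_coeff,
      ofPowerSeries_apply_coeff, coeff_derivative]
    push_cast
    ring

theorem lderiv_eq_derivative (f : LaurentSeries ℂ) : lderiv f = LaurentSeries.derivative ℂ f := by
  ext n
  rw [lderiv, show n = n + 1 + -1 by ring, coeff_single_mul_add, one_mul]
  simp

theorem miura_sq_add_lderiv (U : ℂ⟦X⟧) :
    miura U ^ 2 + lderiv (miura U) = single (-2) 2 + single (-1) (-2) * ofPowerSeries ℤ ℂ U
      + ofPowerSeries ℤ ℂ (U ^ 2 + d⁄dX ℂ U) := by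
  have hsq : single (-1 : ℤ) (1 : ℂ) * single (-1) 1 = single (-2) 1 := by
    rw [single_mul_single]
    norm_num
  have hderiv : LaurentSeries.derivative ℂ (single (-1 : ℤ) (1 : ℂ)) = -single (-2) 1 := by
    rw [LaurentSeries.derivative_apply, LaurentSeries.hasseDeriv_single, ← single_neg]
    norm_num
  have htwo : single (-2 : ℤ) (2 : ℂ) = single (-2) 1 + single (-2) 1 := by
    rw [← single_add]
    norm_num
  have hmtwo : single (-1 : ℤ) (-2 : ℂ) = -single (-1) 1 - single (-1) 1 := by
    rw [← single_neg, ← single_sub]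
    norm_num
  rw [lderiv_eq_derivative, miura, map_add, map_neg, hderiv,
    LaurentSeries.derivative_ofPowerSeries, map_add, map_pow, htwo, hmtwo]
  linear_combination hsq

section MiuraTransformCoeff

variable (U : ℂ⟦X⟧)

theorem coeff_miura_sq_add_lderiv (n : ℤ) :
    (miura U ^ 2 + lderiv (miura U)).coeff n = (single (-2) 2 : LaurentSeries ℂ).coeff n
      - 2 * (ofPowerSeries ℤ ℂ U).coeff (n + 1)
      + (ofPowerSeries ℤ ℂ (U ^ 2 + d⁄dX ℂ U)).coeff n := by
  rw [miura_sq_add_lderiv, coeff_add, coeff_add, coeff_single_mul, sub_neg_eq_add]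
  ring

theorem coeff_miura_sq_add_lderiv_of_lt {n : ℤ} (hn : n < -2) :
    (miura U ^ 2 + lderiv (miura U)).coeff n = 0 := by
  rw [coeff_miura_sq_add_lderiv, coeff_single_of_ne (by omega),
    coeff_ofPowerSeries_of_neg _ (by omega), coeff_ofPowerSeries_of_neg _ (by omega)]
  ring

theorem coeff_miura_sq_add_lderiv_neg_two :
    (miura U ^ 2 + lderiv (miura U)).coeff (-2) = 2 := by
  rw [coeff_miura_sq_add_lderiv, coeff_single_same, coeff_ofPowerSeries_of_neg _ (by omega),
    coeff_ofPowerSeries_of_neg _ (by omega)]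
  ring

theorem coeff_miura_sq_add_lderiv_neg_one :
    (miura U ^ 2 + lderiv (miura U)).coeff (-1) = -2 * coeff 0 U := by
  rw [coeff_miura_sq_add_lderiv, coeff_single_of_ne (by omega),
    coeff_ofPowerSeries_of_neg (U ^ 2 + d⁄dX ℂ U) (by omega),
    show (-1 : ℤ) + 1 = (0 : ℕ) from rfl, ofPowerSeries_apply_coeff]
  ring

theorem coeff_miura_sq_add_lderiv_natCast (n : ℕ) :
    (miura U ^ 2 + lderiv (miura U)).coeff n
      = coeff n (U ^ 2 + d⁄dX ℂ U) - 2 * coeff (n + 1) U := by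
  rw [coeff_miura_sq_add_lderiv, coeff_single_of_ne (by omega), ← Nat.cast_succ,
    ofPowerSeries_apply_coeff, ofPowerSeries_apply_coeff]
  ring

end MiuraTransformCoeff

theorem miura_transform_coeffs_and_cubic (U : PowerSeries ℂ) :
    let v : LaurentSeries ℂ := (miura U) ^ 2 + lderiv (miura U)
    (∀ n : ℤ, n < -2 → v.coeff n = 0) ∧
    v.coeff (-2) = 2 ∧
    v.coeff (-1) = -2 * PowerSeries.coeff 0 U ∧
    (∀ n : ℕ, v.coeff (n : ℤ) =
      PowerSeries.coeff n (U ^ 2 + PowerSeries.derivativeFun U)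
        - 2 * PowerSeries.coeff (n + 1) U) ∧
    (1 / 4 : ℂ) * (v.coeff (-1)) ^ 3 - v.coeff 0 * v.coeff (-1) + v.coeff 1 = 0 := by
  intro v
  refine ⟨fun n ↦ coeff_miura_sq_add_lderiv_of_lt U, coeff_miura_sq_add_lderiv_neg_two U,
    coeff_miura_sq_add_lderiv_neg_one U, coeff_miura_sq_add_lderiv_natCast U, ?_⟩
  have hm1 : v.coeff (-1) = -2 * coeff 0 U := coeff_miura_sq_add_lderiv_neg_one U
  have h0 : v.coeff 0 = coeff 0 (U ^ 2 + d⁄dX ℂ U) - 2 * coeff 1 U :=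
    coeff_miura_sq_add_lderiv_natCast U 0
  have h1 : v.coeff 1 = coeff 1 (U ^ 2 + d⁄dX ℂ U) - 2 * coeff 2 U :=
    coeff_miura_sq_add_lderiv_natCast U 1
  rw [hm1, h0, h1, map_add, map_add, coeff_derivative, coeff_derivative,
    coeff_zero_eq_constantCoeff, map_pow, coeff_one_pow]
  push_cast
  ring
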